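/- Fix k ∈ ℕ, σ ≥ 0, d ≥ 1, m, n₀, n₁,…,n_k ∈ ℝ with (σ-d)/2 - m - n_i < 0 for all i and A + (d+σ)/2 > 0, A + (d+σ)/2 > n₀ - m, where A = (1/2)∑_{i=1}^k(σ - d - 2m - 2n_i). For α ∈ ℝ set δ(α) = n₀ + α - σ + ∑_{i=1}^k (2m + n_i + α + d - σ), and define c_N := ∑_{l₁,…,l_k ∈ ℤ^d, |l_i| ≤ N} [⟨l₁+⋯+l_k⟩^{α+n₀} / (∑_{i=1}^k ⟨l_i⟩^σ + ⟨l₁+⋯+l_k⟩^σ)] ∏_{i=1}^k ⟨l_i⟩^{α+n_i+2m-σ}. Then c_N ≳ N^{δ(α)} when δ(α) > 0, and c_N ≳ log N when δ(α) = 0. -/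

import Mathlib

/-- The Japanese bracket `⟨l⟩ = (1 + |l|²)^{1/2}` of `l ∈ ℤ^d`. -/
noncomputable def jbracket {d : ℕ} (l : Fin d → ℤ) : ℝ :=
  (1 + ∑ r, ((l r : ℝ)) ^ 2) ^ ((1 : ℝ) / 2)

/-- The finite set of frequencies `l ∈ ℤ^d` with `|l| ≤ N`. -/
noncomputable def freqBox (d N : ℕ) : Finset (Fin d → ℤ) :=
  (Finset.Icc (fun _ => -(N : ℤ)) (fun _ => (N : ℤ))).filter
    (fun l => (∑ r, (l r) ^ 2) ≤ (N : ℤ) ^ 2)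

/-- The renormalisation constant
`c_N = ∑_{|lᵢ|≤N} ⟨l₁+⋯+l_k⟩^{α+n₀} / (∑ᵢ⟨lᵢ⟩^σ + ⟨l₁+⋯+l_k⟩^σ) ∏ᵢ ⟨lᵢ⟩^{α+nᵢ+2m-σ}`. -/
noncomputable def renormConst (d k : ℕ) (σ m n₀ : ℝ) (n : Fin k → ℝ) (α : ℝ) (N : ℕ) : ℝ :=
  ∑ l ∈ Fintype.piFinset (fun _ : Fin k => freqBox d N),
    jbracket (∑ i, l i) ^ (α + n₀) /
        ((∑ i, jbracket (l i) ^ σ) + jbracket (∑ i, l i) ^ σ) *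
      ∏ i, jbracket (l i) ^ (α + n i + 2 * m - σ)

/-!
On the shell where every coordinate of every `lᵢ` lies in `[a, 2a)`, all the brackets `⟨lᵢ⟩` and
`⟨l₁ + ⋯ + l_k⟩` lie in `[a, 3dk·a]`, so each summand of `c_N` is `≳ a^{δ - dk}`; the shell has
`a^{dk}` points and therefore contributes `≳ a^δ`. For `δ > 0` a single shell with `a ≍ N` gives
`c_N ≳ N^δ`. For `δ = 0` the `≍ log N` pairwise disjoint dyadic shells `a = 2^j ≲ N` contribute
`≳ 1` each. Small `N` are covered by the summand at `l = 0`, which equals `1 / (k + 1)`.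
-/

section RpowComparison

variable {a x K : ℝ}

lemma rpow_le_mul_rpow_of_le_mul (e : ℝ) (ha : 0 < a) (hK : 1 ≤ K) (hax : a ≤ x)
    (hxK : x ≤ K * a) : x ^ e ≤ K ^ |e| * a ^ e := by
  rcases le_or_gt 0 e with he | he
  · rw [abs_of_nonneg he, ← Real.mul_rpow (by linarith) ha.le]
    exact Real.rpow_le_rpow (ha.le.trans hax) hxK he
  · calc x ^ e ≤ a ^ e := Real.rpow_le_rpow_of_nonpos ha hax he.le
      _ ≤ K ^ |e| * a ^ e :=
        le_mul_of_one_le_left (by positivity) (Real.one_le_rpow hK (abs_nonneg e))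

lemma mul_rpow_le_rpow_of_le_mul (e : ℝ) (ha : 0 < a) (hK : 1 ≤ K) (hax : a ≤ x)
    (hxK : x ≤ K * a) : K ^ (-|e|) * a ^ e ≤ x ^ e := by
  rcases le_or_gt 0 e with he | he
  · calc K ^ (-|e|) * a ^ e ≤ a ^ e :=
        mul_le_of_le_one_left (by positivity)
          (Real.rpow_le_one_of_one_le_of_nonpos hK (neg_nonpos.2 (abs_nonneg e)))
      _ ≤ x ^ e := Real.rpow_le_rpow ha.le hax he
  · rw [abs_of_neg he, neg_neg, ← Real.mul_rpow (by linarith) ha.le]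
    exact Real.rpow_le_rpow_of_nonpos (ha.trans_le hax) hxK he.le

end RpowComparison

lemma exists_mul_rpow_le_of_mem_Icc {k : ℕ} {K : ℝ} (hK : 1 ≤ K) (E σ : ℝ) (e : Fin k → ℝ) :
    ∃ c > 0, ∀ a > 0, ∀ (x₀ : ℝ) (x : Fin k → ℝ), x₀ ∈ Set.Icc a (K * a) →
      (∀ i, x i ∈ Set.Icc a (K * a)) →
      c * a ^ (E - σ + ∑ i, e i) ≤ x₀ ^ E / (∑ i, x i ^ σ + x₀ ^ σ) * ∏ i, x i ^ e i := by
  refine ⟨K ^ (-|E|) / ((k + 1) * K ^ |σ|) * ∏ i, K ^ (-|e i|), by positivity, ?_⟩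
  intro a ha x₀ x hx₀ hx
  have hx₀pos : 0 < x₀ := ha.trans_le hx₀.1
  have hxpos : ∀ i, 0 < x i := fun i => ha.trans_le (hx i).1
  have hnum := mul_rpow_le_rpow_of_le_mul E ha hK hx₀.1 hx₀.2
  have hden : ∑ i, x i ^ σ + x₀ ^ σ ≤ (k + 1) * (K ^ |σ| * a ^ σ) :=
    calc ∑ i, x i ^ σ + x₀ ^ σ ≤ ∑ _i : Fin k, K ^ |σ| * a ^ σ + K ^ |σ| * a ^ σ :=
          add_le_add
            (Finset.sum_le_sum fun i _ => rpow_le_mul_rpow_of_le_mul σ ha hK (hx i).1 (hx i).2)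
            (rpow_le_mul_rpow_of_le_mul σ ha hK hx₀.1 hx₀.2)
      _ = (k + 1) * (K ^ |σ| * a ^ σ) := by simp; ring
  have hden_pos : 0 < ∑ i, x i ^ σ + x₀ ^ σ :=
    add_pos_of_nonneg_of_pos (Finset.sum_nonneg fun i _ => (Real.rpow_pos_of_pos (hxpos i) σ).le)
      (Real.rpow_pos_of_pos hx₀pos σ)
  have hprod : ∏ i, K ^ (-|e i|) * a ^ e i ≤ ∏ i, x i ^ e i :=
    Finset.prod_le_prod (fun i _ => by positivity)
      fun i _ => mul_rpow_le_rpow_of_le_mul (e i) ha hK (hx i).1 (hx i).2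
  calc _ = K ^ (-|E|) * a ^ E / ((k + 1) * (K ^ |σ| * a ^ σ)) * ∏ i, K ^ (-|e i|) * a ^ e i := by
        rw [Finset.prod_mul_distrib, ← Real.rpow_sum_of_pos ha, Real.rpow_add ha, Real.rpow_sub ha]
        field_simp
    _ ≤ _ := mul_le_mul (div_le_div₀ (Real.rpow_pos_of_pos hx₀pos E).le hnum hden_pos hden) hprod
        (by positivity) (div_nonneg (Real.rpow_pos_of_pos hx₀pos E).le hden_pos.le)

lemma jbracket_pos {d : ℕ} (l : Fin d → ℤ) : 0 < jbracket l :=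
  Real.rpow_pos_of_pos (by positivity) _

lemma jbracket_zero {d : ℕ} : jbracket (0 : Fin d → ℤ) = 1 := by
  simp [jbracket]

lemma jbracket_mem_Icc {d : ℕ} (hd : 1 ≤ d) {l : Fin d → ℤ} {b : ℝ} (hb : 1 ≤ b)
    (hl : ∀ r, b ≤ l r ∧ (l r : ℝ) ≤ 2 * b) : jbracket l ∈ Set.Icc b (3 * d * b) := by
  have hsq : ∀ r, b ^ 2 ≤ (l r : ℝ) ^ 2 ∧ (l r : ℝ) ^ 2 ≤ (2 * b) ^ 2 := fun r =>
    ⟨by nlinarith [hl r], by nlinarith [hl r]⟩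
  have hd' : (1 : ℝ) ≤ d := by exact_mod_cast hd
  rw [jbracket, ← Real.sqrt_eq_rpow]
  constructor
  · refine Real.le_sqrt_of_sq_le ?_
    have r₀ : Fin d := ⟨0, hd⟩
    calc b ^ 2 ≤ (l r₀ : ℝ) ^ 2 := (hsq r₀).1
      _ ≤ ∑ r, (l r : ℝ) ^ 2 :=
        Finset.single_le_sum (f := fun r => (l r : ℝ) ^ 2) (fun r _ => sq_nonneg _)
          (Finset.mem_univ r₀)
      _ ≤ 1 + ∑ r, (l r : ℝ) ^ 2 := le_add_of_nonneg_left zero_le_one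
  · refine Real.sqrt_le_iff.2 ⟨by positivity, ?_⟩
    have hdb : 1 ≤ d * b := one_le_mul_of_one_le_of_one_le hd' hb
    have hdb₂ : d * b ^ 2 ≤ (d * b) ^ 2 := by nlinarith
    calc 1 + ∑ r, (l r : ℝ) ^ 2 ≤ 1 + ∑ _r : Fin d, (2 * b) ^ 2 :=
          (add_le_add_iff_left 1).2 (Finset.sum_le_sum fun r _ => (hsq r).2)
      _ = 1 + d * (2 * b) ^ 2 := by simp
      _ ≤ (3 * d * b) ^ 2 := by nlinarith

noncomputable def shellBox (d a : ℕ) : Finset (Fin d → ℤ) :=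
  Fintype.piFinset fun _ => Finset.Ico (a : ℤ) (2 * a)

lemma card_shellBox (d a : ℕ) : (shellBox d a).card = a ^ d := by
  simp [shellBox, Fintype.card_piFinset, Int.card_Ico, show (2 * a - a : ℤ).toNat = a by omega]

lemma disjoint_shellBox {d a b : ℕ} (hd : 1 ≤ d) (hab : 2 * a ≤ b) :
    Disjoint (shellBox d a) (shellBox d b) := by
  refine Finset.disjoint_left.2 fun l hla hlb => ?_
  have r₀ : Fin d := ⟨0, hd⟩
  have h₁ := Finset.mem_Ico.1 (Fintype.mem_piFinset.1 hla r₀)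
  have h₂ := Finset.mem_Ico.1 (Fintype.mem_piFinset.1 hlb r₀)
  omega

lemma shellBox_subset_freqBox {d a N : ℕ} (h : 2 * d * a ≤ N) : shellBox d a ⊆ freqBox d N := by
  intro l hl
  have hcoord : ∀ r, (a : ℤ) ≤ l r ∧ l r < 2 * a := fun r =>
    Finset.mem_Ico.1 (Fintype.mem_piFinset.1 hl r)
  have hN : (2 * d * a : ℤ) ≤ N := by exact_mod_cast h
  simp only [freqBox, Finset.mem_filter, Finset.mem_Icc, Pi.le_def]
  refine ⟨⟨fun r => ?_, fun r => ?_⟩, ?_⟩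
  · have := hcoord r; omega
  · nlinarith [hcoord r, r.pos]
  · calc ∑ r, l r ^ 2 ≤ ∑ _r : Fin d, (2 * a : ℤ) ^ 2 := by
          gcongr with r <;> linarith [hcoord r]
      _ = d * (2 * a : ℤ) ^ 2 := by simp
      _ ≤ (2 * d * a : ℤ) ^ 2 := by nlinarith [(by nlinarith : (d : ℤ) ≤ d ^ 2)]
      _ ≤ (N : ℤ) ^ 2 := pow_le_pow_left₀ (by positivity) hN 2

lemma jbracket_mem_Icc_of_mem_shellBox {d a : ℕ} (hd : 1 ≤ d) (ha : 1 ≤ a) {l : Fin d → ℤ}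
    (hl : l ∈ shellBox d a) : jbracket l ∈ Set.Icc (a : ℝ) (3 * d * a) :=
  jbracket_mem_Icc hd (by exact_mod_cast ha) fun r => by
    have h := Finset.mem_Ico.1 (Fintype.mem_piFinset.1 hl r)
    constructor <;> norm_cast <;> omega

lemma jbracket_sum_mem_Icc_of_mem_shellBox {d k a : ℕ} (hd : 1 ≤ d) (hk : 1 ≤ k) (ha : 1 ≤ a)
    {l : Fin k → Fin d → ℤ} (hl : ∀ i, l i ∈ shellBox d a) :
    jbracket (∑ i, l i) ∈ Set.Icc ((k * a : ℕ) : ℝ) (3 * d * (k * a : ℕ)) := by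
  have hka : 1 ≤ k * a := Nat.one_le_iff_ne_zero.2 (by positivity)
  refine jbracket_mem_Icc hd (by exact_mod_cast hka) fun r => ?_
  have h : ∀ i, (a : ℤ) ≤ l i r ∧ l i r < 2 * a := fun i =>
    Finset.mem_Ico.1 (Fintype.mem_piFinset.1 (hl i) r)
  rw [Finset.sum_apply]
  push_cast
  constructor
  · calc (k : ℝ) * a = ∑ _i : Fin k, (a : ℝ) := by simp
      _ ≤ ∑ i, (l i r : ℝ) := Finset.sum_le_sum fun i _ => by exact_mod_cast (h i).1
  · calc ∑ i, (l i r : ℝ) ≤ ∑ _i : Fin k, 2 * (a : ℝ) :=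
          Finset.sum_le_sum fun i _ => by exact_mod_cast (h i).2.le
      _ = 2 * (k * a) := by simp; ring

noncomputable def renormSummand (d k : ℕ) (σ m n₀ : ℝ) (n : Fin k → ℝ) (α : ℝ)
    (l : Fin k → Fin d → ℤ) : ℝ :=
  jbracket (∑ i, l i) ^ (α + n₀) /
      ((∑ i, jbracket (l i) ^ σ) + jbracket (∑ i, l i) ^ σ) *
    ∏ i, jbracket (l i) ^ (α + n i + 2 * m - σ)

noncomputable def shellSum (d k : ℕ) (σ m n₀ : ℝ) (n : Fin k → ℝ) (α : ℝ) (a : ℕ) : ℝ :=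
  ∑ l ∈ Fintype.piFinset fun _ : Fin k => shellBox d a, renormSummand d k σ m n₀ n α l

section Summand

variable {d k : ℕ} {σ m n₀ α : ℝ} {n : Fin k → ℝ}

lemma renormSummand_nonneg (l : Fin k → Fin d → ℤ) : 0 ≤ renormSummand d k σ m n₀ n α l := by
  have h : ∀ (l' : Fin d → ℤ) (e : ℝ), 0 ≤ jbracket l' ^ e := fun l' e =>
    (Real.rpow_pos_of_pos (jbracket_pos l') e).le
  exact mul_nonneg (div_nonneg (h _ _) (add_nonneg (Finset.sum_nonneg fun i _ => h _ _) (h _ _)))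
    (Finset.prod_nonneg fun i _ => h _ _)

lemma renormSummand_zero : renormSummand d k σ m n₀ n α 0 = 1 / (k + 1) := by
  simp [renormSummand, jbracket_zero]

lemma sum_renormSummand_le_renormConst {N : ℕ} {S : Finset (Fin k → Fin d → ℤ)}
    (hS : S ⊆ Fintype.piFinset fun _ => freqBox d N) :
    ∑ l ∈ S, renormSummand d k σ m n₀ n α l ≤ renormConst d k σ m n₀ n α N :=
  Finset.sum_le_sum_of_subset_of_nonneg hS fun l _ _ => renormSummand_nonneg l

lemma one_div_le_renormConst (N : ℕ) : 1 / ((k : ℝ) + 1) ≤ renormConst d k σ m n₀ n α N := by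
  have h0 : (0 : Fin k → Fin d → ℤ) ∈ Fintype.piFinset fun _ => freqBox d N :=
    Fintype.mem_piFinset.2 fun _ => by simp [freqBox, Pi.le_def]
  calc 1 / ((k : ℝ) + 1) = renormSummand d k σ m n₀ n α 0 := renormSummand_zero.symm
    _ ≤ renormConst d k σ m n₀ n α N :=
      Finset.single_le_sum (fun l _ => renormSummand_nonneg l) h0

lemma shellSum_le_renormConst {a N : ℕ} (h : 2 * d * a ≤ N) :
    shellSum d k σ m n₀ n α a ≤ renormConst d k σ m n₀ n α N :=
  sum_renormSummand_le_renormConst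
    (Fintype.piFinset_subset _ _ fun _ => shellBox_subset_freqBox h)

lemma sum_shellSum_pow_two_le_renormConst (hd : 1 ≤ d) (hk : 1 ≤ k) {J N : ℕ}
    (h : 2 * d * 2 ^ J ≤ N) :
    ∑ j ∈ Finset.range (J + 1), shellSum d k σ m n₀ n α (2 ^ j) ≤ renormConst d k σ m n₀ n α N := by
  have hdisj :=
    (pairwise_disjoint_on fun j => Fintype.piFinset fun _ : Fin k => shellBox d (2 ^ j)).2
      fun i j hij =>
      Fintype.piFinset_disjoint_of_disjoint _ _ (a := ⟨0, hk⟩)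
        (disjoint_shellBox hd (by rw [← pow_succ']; exact Nat.pow_le_pow_right two_pos hij))
  simp only [shellSum]
  rw [← Finset.sum_biUnion (hdisj.set_pairwise _)]
  refine sum_renormSummand_le_renormConst (Finset.biUnion_subset.2 fun j hj =>
    Fintype.piFinset_subset _ _ fun _ => shellBox_subset_freqBox (h.trans' ?_))
  exact Nat.mul_le_mul_left _ (Nat.pow_le_pow_right two_pos (Finset.mem_range_succ_iff.1 hj))

lemma exists_mul_rpow_le_shellSum (hd : 1 ≤ d) (hk : 1 ≤ k) {δ : ℝ}
    (hδ : δ = n₀ + α - σ + ∑ i, (2 * m + n i + α + d - σ)) :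
    ∃ c > 0, ∀ a : ℕ, 1 ≤ a → c * (a : ℝ) ^ δ ≤ shellSum d k σ m n₀ n α a := by
  have hd' : (1 : ℝ) ≤ d := by exact_mod_cast hd
  have hk' : (1 : ℝ) ≤ k := by exact_mod_cast hk
  have hK : (1 : ℝ) ≤ 3 * d * k := by nlinarith
  obtain ⟨c, hc, hbound⟩ :=
    exists_mul_rpow_le_of_mem_Icc hK (α + n₀) σ fun i => α + n i + 2 * m - σ
  refine ⟨c, hc, fun a ha => ?_⟩
  have ha' : (1 : ℝ) ≤ a := by exact_mod_cast ha
  have hexp : α + n₀ - σ + ∑ i, (α + n i + 2 * m - σ) = δ - d * k := by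
    simp only [hδ, Finset.sum_add_distrib, Finset.sum_sub_distrib, Finset.sum_const,
      Finset.card_univ, Fintype.card_fin, nsmul_eq_mul]
    ring
  have hterm : ∀ l ∈ Fintype.piFinset fun _ : Fin k => shellBox d a,
      c * (a : ℝ) ^ (δ - d * k) ≤ renormSummand d k σ m n₀ n α l := by
    intro l hl
    have hl' := Fintype.mem_piFinset.1 hl
    rw [← hexp]
    refine hbound a (by positivity) _ _ ?_ fun i => ?_
    · refine Set.Icc_subset_Icc ?_ ?_ (jbracket_sum_mem_Icc_of_mem_shellBox hd hk ha hl') <;>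
        push_cast <;> nlinarith
    · refine Set.Icc_subset_Icc le_rfl ?_ (jbracket_mem_Icc_of_mem_shellBox hd ha (hl' i))
      nlinarith [mul_le_mul_of_nonneg_left hk' (by positivity : (0 : ℝ) ≤ 3 * d * a)]
  calc c * (a : ℝ) ^ δ = ((a ^ d) ^ k : ℕ) * (c * (a : ℝ) ^ (δ - d * k)) := by
        rw [Real.rpow_sub (by positivity), ← Nat.cast_mul, Real.rpow_natCast]
        push_cast
        field_simp
        ring
    _ = (Fintype.piFinset fun _ : Fin k => shellBox d a).card • (c * (a : ℝ) ^ (δ - d * k)) := by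
        rw [Fintype.card_piFinset, nsmul_eq_mul]
        simp [card_shellBox]
    _ ≤ shellSum d k σ m n₀ n α a := Finset.card_nsmul_le_sum _ _ _ hterm

end Summand

lemma div_two_mul_le_natCast_div {N b : ℕ} (hb : 0 < b) (hbN : b ≤ N) :
    (N : ℝ) / (2 * b) ≤ (N / b : ℕ) := by
  have h₁ : (1 : ℝ) ≤ (N / b : ℕ) := by exact_mod_cast Nat.div_pos hbN hb
  have h₂ : (N : ℝ) < b * ((N / b : ℕ) + 1) := by exact_mod_cast Nat.lt_mul_div_succ N hb
  rw [div_le_iff₀ (by positivity)]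
  nlinarith

lemma log_le_mul_natLog_div {N b : ℕ} (hb : 1 ≤ b) (hN : b ^ 2 ≤ N) :
    Real.log N ≤ 2 * Real.log 2 * (Nat.log 2 (N / b) + 1) := by
  set J := Nat.log 2 (N / b)
  have hN₀ : (0 : ℝ) < N := by exact_mod_cast (Nat.one_le_pow _ _ hb).trans hN
  have hNJ : N < b * 2 ^ (J + 1) :=
    (Nat.lt_mul_div_succ N hb).trans_le
      (Nat.mul_le_mul_left _ (Nat.lt_pow_succ_log_self one_lt_two _))
  have hlogN : Real.log N < Real.log b + (J + 1) * Real.log 2 :=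
    calc Real.log N < Real.log (b * 2 ^ (J + 1)) := Real.log_lt_log hN₀ (by exact_mod_cast hNJ)
      _ = Real.log b + (J + 1) * Real.log 2 := by
        rw [Real.log_mul (by positivity) (by positivity), Real.log_pow]
        push_cast
        ring
  have hlogb : 2 * Real.log b ≤ Real.log N :=
    calc 2 * Real.log b = Real.log ((b : ℝ) ^ 2) := by rw [Real.log_pow]; push_cast; ring
      _ ≤ Real.log N := Real.log_le_log (by positivity) (by exact_mod_cast hN)
  linarith

lemma exists_pos_mul_le_of_forall_ge {f g : ℕ → ℝ} {b C : ℝ} {N₀ : ℕ} (hb : 0 < b)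
    (hfb : ∀ N, b ≤ f N) (hC : 0 < C) (hfg : ∀ N, N₀ ≤ N → C * g N ≤ f N) :
    ∃ c > 0, ∀ N, c * g N ≤ f N := by
  set M := ∑ N ∈ Finset.range N₀, |g N|
  have hM : 0 ≤ M := Finset.sum_nonneg fun _ _ => abs_nonneg _
  have hc : 0 < min C (b / (M + 1)) := lt_min hC (by positivity)
  refine ⟨min C (b / (M + 1)), hc, fun N => ?_⟩
  rcases le_or_gt N₀ N with hN | hN
  · rcases le_or_gt 0 (g N) with hg | hg
    · exact (mul_le_mul_of_nonneg_right (min_le_left _ _) hg).trans (hfg N hN)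
    · exact (mul_neg_of_pos_of_neg hc hg).le.trans (hb.le.trans (hfb N))
  · have hgM : g N ≤ M := (le_abs_self _).trans <|
      Finset.single_le_sum (f := fun N => |g N|) (fun _ _ => abs_nonneg _) (Finset.mem_range.2 hN)
    calc min C (b / (M + 1)) * g N ≤ min C (b / (M + 1)) * M := by gcongr
      _ ≤ b / (M + 1) * M := by gcongr; exact min_le_right _ _
      _ ≤ b := by rw [div_mul_eq_mul_div, div_le_iff₀ (by positivity)]; nlinarith
      _ ≤ f N := hfb N

section Divergence

variable {d k : ℕ} {σ m n₀ α δ : ℝ} {n : Fin k → ℝ}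

lemma exists_mul_rpow_le_renormConst (hd : 1 ≤ d) (hk : 1 ≤ k)
    (hδ : δ = n₀ + α - σ + ∑ i, (2 * m + n i + α + d - σ)) (hδ₀ : 0 ≤ δ) :
    ∃ c > 0, ∀ N : ℕ, 2 * d ≤ N → c * (N : ℝ) ^ δ ≤ renormConst d k σ m n₀ n α N := by
  obtain ⟨c, hc, hshell⟩ := exists_mul_rpow_le_shellSum hd hk hδ
  refine ⟨c * (4 * d : ℝ) ^ (-δ), by positivity, fun N hN => ?_⟩
  calc c * (4 * d : ℝ) ^ (-δ) * (N : ℝ) ^ δ = c * ((N : ℝ) / (4 * d)) ^ δ := by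
        rw [Real.div_rpow (by positivity) (by positivity), Real.rpow_neg (by positivity)]
        ring
    _ ≤ c * ((N / (2 * d) : ℕ) : ℝ) ^ δ := by
        gcongr
        calc (N : ℝ) / (4 * d) = N / (2 * (2 * d : ℕ)) := by push_cast; ring
          _ ≤ _ := div_two_mul_le_natCast_div (by positivity) hN
    _ ≤ shellSum d k σ m n₀ n α (N / (2 * d)) := hshell _ (Nat.div_pos hN (by positivity))
    _ ≤ renormConst d k σ m n₀ n α N := shellSum_le_renormConst (Nat.mul_div_le N (2 * d))

lemma exists_mul_log_le_renormConst (hd : 1 ≤ d) (hk : 1 ≤ k)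
    (hδ : δ = n₀ + α - σ + ∑ i, (2 * m + n i + α + d - σ)) (hδ₀ : δ = 0) :
    ∃ c > 0, ∀ N : ℕ, (2 * d) ^ 2 ≤ N → c * Real.log N ≤ renormConst d k σ m n₀ n α N := by
  obtain ⟨c, hc, hshell⟩ := exists_mul_rpow_le_shellSum hd hk hδ
  have hlog2 : 0 < Real.log 2 := Real.log_pos one_lt_two
  refine ⟨c / (2 * Real.log 2), by positivity, fun N hN => ?_⟩
  have h2d : 0 < 2 * d := by positivity
  have hJ : 2 * d * 2 ^ Nat.log 2 (N / (2 * d)) ≤ N := by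
    rw [mul_comm, ← Nat.le_div_iff_mul_le h2d]
    refine Nat.pow_log_le_self 2 (Nat.div_pos ?_ h2d).ne'
    nlinarith
  calc c / (2 * Real.log 2) * Real.log N
      ≤ c / (2 * Real.log 2) * (2 * Real.log 2 * (Nat.log 2 (N / (2 * d)) + 1)) := by
        gcongr
        exact log_le_mul_natLog_div h2d hN
    _ = ∑ _j ∈ Finset.range (Nat.log 2 (N / (2 * d)) + 1), c := by
        simp only [Finset.sum_const, Finset.card_range, nsmul_eq_mul]
        field_simp
        push_cast
        ring
    _ ≤ ∑ j ∈ Finset.range (Nat.log 2 (N / (2 * d)) + 1), shellSum d k σ m n₀ n α (2 ^ j) :=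
        Finset.sum_le_sum fun j _ => by simpa [hδ₀] using hshell (2 ^ j) Nat.one_le_two_pow
    _ ≤ renormConst d k σ m n₀ n α N := sum_shellSum_pow_two_le_renormConst hd hk hJ

end Divergence

theorem renormConst_divergence_general (d k : ℕ) (hd : 1 ≤ d) (hk : 1 ≤ k)
    (σ m n₀ : ℝ) (n : Fin k → ℝ)
    (α : ℝ) (δ : ℝ) (hδ : δ = n₀ + α - σ + ∑ i, (2 * m + n i + α + d - σ)) :
    (0 < δ → ∃ c : ℝ, 0 < c ∧ ∀ N : ℕ, 1 ≤ N →
        c * (N : ℝ) ^ δ ≤ renormConst d k σ m n₀ n α N) ∧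
    (δ = 0 → ∃ c : ℝ, 0 < c ∧ ∀ N : ℕ, 1 ≤ N →
        c * Real.log N ≤ renormConst d k σ m n₀ n α N) := by
  have hbase : ∀ N, 1 / ((k : ℝ) + 1) ≤ renormConst d k σ m n₀ n α N := one_div_le_renormConst
  refine ⟨fun hδpos => ?_, fun hδ₀ => ?_⟩
  · obtain ⟨c, hc, hlarge⟩ := exists_mul_rpow_le_renormConst hd hk hδ hδpos.le
    obtain ⟨c', hc', hall⟩ := exists_pos_mul_le_of_forall_ge (by positivity) hbase hc hlarge
    exact ⟨c', hc', fun N _ => hall N⟩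
  · obtain ⟨c, hc, hlarge⟩ := exists_mul_log_le_renormConst hd hk hδ hδ₀
    obtain ⟨c', hc', hall⟩ := exists_pos_mul_le_of_forall_ge (by positivity) hbase hc hlarge
    exact ⟨c', hc', fun N _ => hall N⟩

/-- Divergence of the renormalisation constant: under Assumptions 1 and 2, `c_N ≳ N^{δ(α)}`
when `δ(α) > 0` and `c_N ≳ log N` when `δ(α) = 0`, where
`δ(α) = n₀ + α - σ + ∑ᵢ (2m + nᵢ + α + d - σ)`. -/
theorem renormConst_divergence (d k : ℕ) (hd : 1 ≤ d) (hk : 1 ≤ k)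
    (σ m n₀ : ℝ) (hσ : 0 ≤ σ) (n : Fin k → ℝ)
    (hassum1 : ∀ i, (σ - d) / 2 - m - n i < 0)
    (A : ℝ) (hA : A = (1 / 2) * ∑ i, (σ - d - 2 * m - 2 * n i))
    (hassum2a : 0 < A + ((d : ℝ) + σ) / 2)
    (hassum2b : n₀ - m < A + ((d : ℝ) + σ) / 2)
    (α : ℝ) (δ : ℝ) (hδ : δ = n₀ + α - σ + ∑ i, (2 * m + n i + α + d - σ)) :
    (0 < δ → ∃ c : ℝ, 0 < c ∧ ∀ N : ℕ, 1 ≤ N →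
        c * (N : ℝ) ^ δ ≤ renormConst d k σ m n₀ n α N) ∧
    (δ = 0 → ∃ c : ℝ, 0 < c ∧ ∀ N : ℕ, 1 ≤ N →
        c * Real.log N ≤ renormConst d k σ m n₀ n α N) :=
  renormConst_divergence_general d k hd hk σ m n₀ n α δ hδ
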